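/- arXiv:0909.5311 — 5 statements merged into one kernel-verified Lean document; each statement's English description precedes it below -/
import Mathlib

section
/- Let G be a connected (simple, finite) graph such that all holes of G are pairwise edge-disjoint and G has exactly one non-edge maximal clique K. Then a cycle C in G is a hole if and only if C has at most 2 vertices in common with K. -/
open SimpleGraph

/-- A hole of a graph: a chordless (induced) cycle of length at least 4. -/
def SimpleGraph.IsHole {V : Type*} (G : SimpleGraph V) {v : V} (c : G.Walk v v) : Prop :=
  c.IsCycle ∧ 4 ≤ c.length ∧
    ∀ x y, x ∈ c.support → y ∈ c.support → G.Adj x y → s(x, y) ∈ c.edges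

/-- The set of edge sets of holes of `G`; its cardinality is the number of holes of `G`. -/
def SimpleGraph.holeEdgeSets {V : Type*} (G : SimpleGraph V) : Set (Set (Sym2 V)) :=
  {E | ∃ (v : V) (c : G.Walk v v), G.IsHole c ∧ E = {e | e ∈ c.edges}}

/-- All holes of `G` are pairwise edge-disjoint: two holes either have the same edge set
or share no edge. -/
def SimpleGraph.HolesEdgeDisjoint {V : Type*} (G : SimpleGraph V) : Prop :=
  ∀ ⦃u v : V⦄ (c₁ : G.Walk u u) (c₂ : G.Walk v v), G.IsHole c₁ → G.IsHole c₂ →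
    (∀ e, e ∈ c₁.edges ↔ e ∈ c₂.edges) ∨ (∀ e, e ∈ c₁.edges → e ∉ c₂.edges)

/-- A maximal clique of `G` (as a vertex set). -/
def SimpleGraph.IsMaxClique {V : Type*} (G : SimpleGraph V) (K : Set V) : Prop :=
  G.IsClique K ∧ ∀ K', G.IsClique K' → K ⊆ K' → K' = K

/-- A non-edge maximal clique: a maximal clique with at least 3 vertices. -/
def SimpleGraph.IsNonEdgeMaxClique {V : Type*} (G : SimpleGraph V) (K : Set V) : Prop :=
  G.IsMaxClique K ∧ 3 ≤ K.ncard

/-- The clique number of `G`. -/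
noncomputable def SimpleGraph.cliqueNumber {V : Type*} (G : SimpleGraph V) : ℕ :=
  sSup {n | ∃ s : Finset V, G.IsNClique n s}

/-- A `K`-avoiding path: a path which is not an edge of the clique `K` and
whose internal vertices all avoid `K`. -/
def SimpleGraph.IsKAvoidingPath {V : Type*} (G : SimpleGraph V) (K : Set V)
    {a b : V} (p : G.Walk a b) : Prop :=
  p.IsPath ∧ ¬(p.length = 1 ∧ a ∈ K ∧ b ∈ K) ∧
    ∀ w ∈ p.support, w = a ∨ w = b ∨ w ∉ K

/-- The competition graph of a digraph given by its arc relation `D`. -/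
def competitionGraph {V : Type*} (D : V → V → Prop) : SimpleGraph V where
  Adj x y := x ≠ y ∧ ∃ v, D x v ∧ D y v
  symm := by
    constructor
    rintro x y ⟨hxy, v, hx, hy⟩
    exact ⟨hxy.symm, v, hy, hx⟩
  loopless := by
    constructor
    rintro x ⟨hxx, -⟩
    exact hxx rfl

/-- A digraph is acyclic if it has no directed cycle. -/
def DigraphAcyclic {V : Type*} (D : V → V → Prop) : Prop :=
  ∀ x, ¬ Relation.TransGen D x x

/-- `G` together with `k` added isolated vertices. -/
def SimpleGraph.addIsolated {V : Type*} (G : SimpleGraph V) (k : ℕ) :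
    SimpleGraph (V ⊕ Fin k) where
  Adj a b := ∃ x y, G.Adj x y ∧ a = Sum.inl x ∧ b = Sum.inl y
  symm := by
    constructor
    rintro a b ⟨x, y, h, rfl, rfl⟩
    exact ⟨y, x, h.symm, rfl, rfl⟩
  loopless := by
    constructor
    rintro a ⟨x, y, h, rfl, hxy⟩
    exact h.ne (Sum.inl.inj hxy)

/-- The competition number of `G`: the least `k` such that `G` plus `k` isolated
vertices is the competition graph of an acyclic digraph. -/
noncomputable def competitionNumber {V : Type*} (G : SimpleGraph V) : ℕ :=
  sInf {k | ∃ D : (V ⊕ Fin k) → (V ⊕ Fin k) → Prop,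
    DigraphAcyclic D ∧ competitionGraph D = G.addIsolated k}


/-! Three vertices of `K` span a triangle, and a chordless cycle through all three of its edges
is the triangle itself; so a hole meets the clique `K` in at most two vertices. Conversely, every
triangle extends to a maximal clique with at least three vertices, which must be `K`; hence a cycle
meeting `K` in at most two vertices has length at least 4. A chord would split it into two shorter
cycles which, by induction on the length, are holes; they share the chord but not all their edges,
contradicting edge-disjointness. -/

namespace SimpleGraph

variable {V : Type*} {G : SimpleGraph V}

namespace Walk

lemma support_subset_of_start_mem {S : Set V} {u w : V} (p : G.Walk u w) (hu : u ∈ S)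
    (hS : ∀ a b, s(a, b) ∈ p.edges → a ∈ S → b ∈ S) : {t | t ∈ p.support} ⊆ S := by
  induction p with
  | nil => simpa using hu
  | cons h q ih =>
    intro t ht
    rcases List.mem_cons.mp ht with rfl | ht
    · exact hu
    · exact ih (hS _ _ (by simp) hu) (fun a b hab => hS a b (by simp [hab])) ht

lemma mem_edges_of_length_eq_one {u v : V} {p : G.Walk u v} (h : p.length = 1) :
    s(u, v) ∈ p.edges := by
  cases p with
  | nil => simp at h
  | cons _ q => cases q with
    | nil => simp
    | cons _ _ => simp at h

lemma two_le_length_of_notMem_edges {u v : V} (p : G.Walk u v) (huv : u ≠ v)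
    (h : s(u, v) ∉ p.edges) : 2 ≤ p.length := by
  have : p.length ≠ 0 := fun h0 => huv (eq_of_length_eq_zero h0)
  have : p.length ≠ 1 := fun h1 => h (mem_edges_of_length_eq_one h1)
  omega

lemma isClique_support_of_length_eq_three {u : V} {c : G.Walk u u} (h : c.length = 3) :
    G.IsClique {t | t ∈ c.support} := by
  match c, h with
  | cons (v := a) h₁ (cons (v := b) h₂ (cons h₃ nil)), _ =>
    have : {t | t ∈ (cons h₁ (cons h₂ (cons h₃ nil))).support} = {u, a, b} := by
      ext
      simp only [support_cons, support_nil, List.mem_cons, List.not_mem_nil, or_false,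
        Set.mem_ofPred_eq, Set.mem_insert_iff, Set.mem_singleton_iff]
      tauto
    rw [this]
    simp [isClique_insert, h₁, h₂, h₃.symm]

lemma IsCycle.ncard_support {u : V} {c : G.Walk u u} (hc : c.IsCycle) :
    {t | t ∈ c.support}.ncard = c.length := by
  classical
  have : {t | t ∈ c.support} = ↑c.support.tail.toFinset := by
    ext t
    rw [Set.mem_ofPred_eq, ← c.cons_tail_support, Finset.mem_coe, List.mem_toFinset, List.tail_cons,
      List.mem_cons, or_iff_right_of_imp (· ▸ end_mem_tail_support hc.not_nil)]
  rw [this, Set.ncard_coe_finset, List.toFinset_card_of_nodup hc.support_nodup, List.length_tail,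
    length_support, Nat.add_sub_cancel]

lemma IsCycle.eq_or_eq_of_mem_edges {u a y z b : V} {c : G.Walk u u} (hc : c.IsCycle)
    (hy : s(a, y) ∈ c.edges) (hz : s(a, z) ∈ c.edges) (hyz : y ≠ z) (hb : s(a, b) ∈ c.edges) :
    b = y ∨ b = z := by
  have htwo := hc.ncard_neighborSet_toSubgraph_eq_two (c.fst_mem_support_of_mem_edges hb)
  have hpair : ({y, z} : Set V) = c.toSubgraph.neighborSet a := by
    refine Set.eq_of_subset_of_ncard_le ?_ ?_ (Set.finite_of_ncard_pos (by omega))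
    · rintro t (rfl | rfl) <;> simpa [adj_toSubgraph_iff_mem_edges]
    · rw [Set.ncard_pair hyz, htwo]
  have : b ∈ c.toSubgraph.neighborSet a := by simpa [adj_toSubgraph_iff_mem_edges]
  simpa [← hpair] using this

lemma IsCycle.length_eq_three_of_mem_edges {u x y z : V} {c : G.Walk u u} (hc : c.IsCycle)
    (hxy : s(x, y) ∈ c.edges) (hxz : s(x, z) ∈ c.edges) (hyz : s(y, z) ∈ c.edges) :
    c.length = 3 := by
  classical
  have hx : x ∈ c.support := c.fst_mem_support_of_mem_edges hxy
  have hclosed : ∀ a b, s(a, b) ∈ c.edges → a ∈ ({x, y, z} : Set V) → b ∈ ({x, y, z} : Set V) := by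
    have hyx := Sym2.eq_swap ▸ hxy
    have hzx := Sym2.eq_swap ▸ hxz
    have hzy := Sym2.eq_swap ▸ hyz
    rintro a b hab (rfl | rfl | rfl)
    · rcases hc.eq_or_eq_of_mem_edges hxy hxz (c.adj_of_mem_edges hyz).ne hab with rfl | rfl <;>
        simp
    · rcases hc.eq_or_eq_of_mem_edges hyx hyz (c.adj_of_mem_edges hxz).ne hab with rfl | rfl <;>
        simp
    · rcases hc.eq_or_eq_of_mem_edges hzx hzy (c.adj_of_mem_edges hxy).ne hab with rfl | rfl <;>
        simp
  have hsupp : {t | t ∈ c.support} ⊆ {x, y, z} := fun t ht =>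
    (c.rotate x hx).support_subset_of_start_mem (by simp)
      (fun a b hab => hclosed a b ((c.rotate_edges x hx).mem_iff.mp hab))
      ((c.mem_support_rotate_iff x hx).mpr ht)
  have hle : c.length ≤ 3 := calc
    c.length = {t | t ∈ c.support}.ncard := hc.ncard_support.symm
    _ ≤ ({x, y, z} : Set V).ncard := Set.ncard_le_ncard hsupp
    _ ≤ 3 := (Set.ncard_insert_le _ _).trans
      (Nat.succ_le_succ ((Set.ncard_insert_le _ _).trans (by simp)))
  have := hc.three_le_length
  omega

lemma IsCycle.exists_isCycle_pair_of_chord [DecidableEq V] {u x y : V} {c : G.Walk u u}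
    (hc : c.IsCycle) (hx : x ∈ c.support) (hy : y ∈ c.support) (hxy : G.Adj x y)
    (hchord : s(x, y) ∉ c.edges) :
    ∃ C₁ C₂ : G.Walk x x, C₁.IsCycle ∧ C₂.IsCycle ∧ C₁.length < c.length ∧
      C₂.length < c.length ∧ C₁.support ⊆ c.support ∧ C₂.support ⊆ c.support ∧
      s(x, y) ∈ C₁.edges ∧ s(x, y) ∈ C₂.edges ∧ ∃ e ∈ C₁.edges, e ∉ C₂.edges := by
  set d := c.rotate x hx
  have hd : d.IsCycle := hc.rotate hx
  have hyd : y ∈ d.support := (c.mem_support_rotate_iff x hx).mpr hy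
  set p := d.takeUntil y hyd
  set q := d.dropUntil y hyd
  have hpq : p.append q = d := d.take_spec hyd
  have hp : p.IsPath := hd.isPath_takeUntil hyd
  have hq : q.IsPath := by
    rw [← hpq] at hd
    exact hd.isPath_of_append_right (not_nil_of_ne hxy.ne)
  have hpq_disj : p.edges.Disjoint q.edges := hd.isTrail.disjoint_edges_takeUntil_dropUntil hyd
  have hd_edges : d.edges = p.edges ++ q.edges := by rw [← edges_append, hpq]
  have hchord_d : s(x, y) ∉ d.edges := fun h => hchord ((c.rotate_edges x hx).mem_iff.mp h)
  have hchord_p : s(x, y) ∉ p.edges := fun h => hchord_d (hd_edges ▸ List.mem_append_left _ h)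
  have hchord_q : s(y, x) ∉ q.edges := fun h =>
    hchord_d (hd_edges ▸ List.mem_append_right _ (Sym2.eq_swap ▸ h))
  have hlen : p.length + q.length = c.length := by rw [← length_append, hpq, length_rotate]
  have hp2 := p.two_le_length_of_notMem_edges hxy.ne hchord_p
  have hq2 := q.two_le_length_of_notMem_edges hxy.ne' hchord_q
  have hsupp : ∀ t, t ∈ p.support ∨ t ∈ q.support → t ∈ c.support := by
    rintro t (ht | ht)
    · exact (c.mem_support_rotate_iff x hx).mp (d.support_takeUntil_subset_support hyd ht)
    · exact (c.mem_support_rotate_iff x hx).mp (d.support_dropUntil_subset_support hyd ht)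
  obtain ⟨e, he⟩ : ∃ e, e ∈ p.edges :=
    List.exists_mem_of_ne_nil _ (edges_eq_nil.not.mpr (not_nil_of_ne hxy.ne))
  refine ⟨cons hxy p.reverse, cons hxy q, ?_, ?_, ?_, ?_, ?_, ?_, by simp, by simp, e, ?_, ?_⟩
  · exact (cons_isCycle_iff _ _).mpr ⟨hp.reverse, by simpa [Sym2.eq_swap] using hchord_p⟩
  · exact (cons_isCycle_iff _ _).mpr ⟨hq, by rwa [Sym2.eq_swap]⟩
  · simp only [length_cons, length_reverse]; omega
  · simp only [length_cons]; omega
  · intro t ht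
    rw [support_cons, support_reverse, List.mem_cons, List.mem_reverse] at ht
    rcases ht with rfl | ht
    · exact hx
    · exact hsupp t (.inl ht)
  · intro t ht
    rw [support_cons, List.mem_cons] at ht
    rcases ht with rfl | ht
    · exact hx
    · exact hsupp t (.inr ht)
  · simp [he]
  · rw [edges_cons, List.mem_cons, not_or]
    exact ⟨fun h => hchord_p (h ▸ he), hpq_disj he⟩

end Walk

lemma exists_isMaxClique_superset [Finite V] {s : Set V} (hs : G.IsClique s) :
    ∃ K, G.IsMaxClique K ∧ s ⊆ K := by
  obtain ⟨K, hsK, hK⟩ := Finite.exists_le_maximal (p := G.IsClique) hs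
  exact ⟨K, ⟨hK.prop, fun K' hK' hKK' => hK.eq_of_superset hK' hKK'⟩, hsK⟩

/- Finiteness of `V` is essential here: an infinite maximal clique has `ncard = 0`, so it would
escape the uniqueness hypothesis. -/
lemma subset_of_isClique_of_three_le_ncard [Finite V] {K s : Set V}
    (huniq : ∀ K', G.IsNonEdgeMaxClique K' → K' = K) (hs : G.IsClique s) (h3 : 3 ≤ s.ncard) :
    s ⊆ K := by
  obtain ⟨K', hK', hsK'⟩ := exists_isMaxClique_superset hs
  rwa [← huniq K' ⟨hK', h3.trans (Set.ncard_le_ncard hsK')⟩]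

theorem IsHole.ncard_inter_support_le_two {K : Set V} (hK : G.IsClique K) {u : V}
    {c : G.Walk u u} (h : G.IsHole c) : (K ∩ {x | x ∈ c.support}).ncard ≤ 2 := by
  obtain ⟨hc, h4, hchordless⟩ := h
  by_contra! h3
  obtain ⟨x, y, z, ⟨hxK, hx⟩, ⟨hyK, hy⟩, ⟨hzK, hz⟩, hxy, hxz, hyz⟩ :=
    (Set.two_lt_ncard_iff (Set.finite_of_ncard_pos (by omega))).mp h3
  have := hc.length_eq_three_of_mem_edges (hchordless x y hx hy (hK hxK hyK hxy))
    (hchordless x z hx hz (hK hxK hzK hxz)) (hchordless y z hy hz (hK hyK hzK hyz))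
  omega

theorem isHole_of_ncard_inter_support_le_two [Finite V] (hdisj : G.HolesEdgeDisjoint)
    {K : Set V} (huniq : ∀ K', G.IsNonEdgeMaxClique K' → K' = K) {u : V} {c : G.Walk u u}
    (hc : c.IsCycle) (hcard : (K ∩ {x | x ∈ c.support}).ncard ≤ 2) : G.IsHole c := by
  classical
  induction hn : c.length using Nat.strong_induction_on generalizing u c with
  | _ n ih =>
  have h4 : 4 ≤ c.length := by
    by_contra
    have h3 : c.length = 3 := by have := hc.three_le_length; omega
    have hK : {t | t ∈ c.support} ⊆ K := subset_of_isClique_of_three_le_ncard huniq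
      (Walk.isClique_support_of_length_eq_three h3) (by rw [hc.ncard_support, h3])
    rw [Set.inter_eq_right.mpr hK, hc.ncard_support, h3] at hcard
    omega
  refine ⟨hc, h4, fun x y hx hy hxy => ?_⟩
  by_contra hchord
  obtain ⟨C₁, C₂, hC₁, hC₂, hlen₁, hlen₂, hsupp₁, hsupp₂, hxy₁, hxy₂, e, he₁, he₂⟩ :=
    hc.exists_isCycle_pair_of_chord hx hy hxy hchord
  have hcard_le {C : G.Walk x x} (hC : C.support ⊆ c.support) :
      (K ∩ {t | t ∈ C.support}).ncard ≤ 2 :=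
    (Set.ncard_le_ncard (Set.inter_subset_inter_right _ fun _ ht => hC ht)).trans hcard
  have hhole₁ := ih _ (hn ▸ hlen₁) hC₁ (hcard_le hsupp₁) rfl
  have hhole₂ := ih _ (hn ▸ hlen₂) hC₂ (hcard_le hsupp₂) rfl
  rcases hdisj C₁ C₂ hhole₁ hhole₂ with hsame | hdisjoint
  · exact he₂ ((hsame e).mp he₁)
  · exact hdisjoint _ hxy₁ hxy₂

end SimpleGraph

theorem cycle_isHole_iff_meets_clique_in_at_most_two_general
    {V : Type*} [Fintype V] (G : SimpleGraph V)
    (hdisj : G.HolesEdgeDisjoint) (K : Set V)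
    (hK : G.IsNonEdgeMaxClique K)
    (huniq : ∀ K', G.IsNonEdgeMaxClique K' → K' = K)
    {v : V} (c : G.Walk v v) (hc : c.IsCycle) :
    G.IsHole c ↔ (K ∩ {x | x ∈ c.support}).ncard ≤ 2 :=
  ⟨fun h => h.ncard_inter_support_le_two hK.1.1,
    isHole_of_ncard_inter_support_le_two hdisj huniq hc⟩

/-- **Lemma 2.** In a connected graph whose holes are pairwise edge-disjoint
and which has exactly one non-edge maximal clique `K`, a cycle is a hole iff it meets `K`
in at most two vertices. -/
theorem cycle_isHole_iff_meets_clique_in_at_most_two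
    {V : Type*} [Fintype V] (G : SimpleGraph V) (hconn : G.Connected)
    (hdisj : G.HolesEdgeDisjoint) (K : Set V)
    (hK : G.IsNonEdgeMaxClique K)
    (huniq : ∀ K', G.IsNonEdgeMaxClique K' → K' = K)
    {v : V} (c : G.Walk v v) (hc : c.IsCycle) :
    G.IsHole c ↔ (K ∩ {x | x ∈ c.support}).ncard ≤ 2 :=
  cycle_isHole_iff_meets_clique_in_at_most_two_general G hdisj K hK huniq c hc
end

section
/- Let G be a connected graph with exactly h holes such that all holes of G are pairwise edge-disjoint and G has exactly one non-edge maximal clique K, and let H be a hole of G. If, for some edge e of H, the graph G − e (obtained by deleting the edge e) has at least h holes, then e is an edge of K. -/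
open SimpleGraph

/-!
Since the hole `H` contains `e`, it is not a hole of `G - e`; as `G - e` still has at least as
many holes as `G`, some hole `C` of `G - e` is not a hole of `G`, and its only chord in `G` is
`e = xy`. This chord splits `C` into two cycles through `xy`, each chordless in `G`. They
cannot both be holes, since two holes sharing the edge `xy` have the same edges; so one of them
is a triangle `xyz`, which lies in a maximal clique with at least three vertices, that is, in `K`.
-/

namespace SimpleGraph

variable {V : Type*} {G : SimpleGraph V} {v x y : V}

namespace Walk

lemma two_le_length_of_ne_of_notMem_edges {p : G.Walk x y} (hxy : x ≠ y)
    (hp : s(x, y) ∉ p.edges) : 2 ≤ p.length := by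
  match p with
  | nil => exact absurd rfl hxy
  | cons _ nil => simp at hp
  | cons _ (cons _ _) => simp

lemma exists_adj_adj_of_length_eq_two {p : G.Walk x y} (hp : p.length = 2) :
    ∃ z, G.Adj x z ∧ G.Adj z y := by
  match p with
  | cons h (cons h' nil) => exact ⟨_, h, h'⟩

lemma IsCycle.append_comm {p : G.Walk x y} {q : G.Walk y x} (hc : (p.append q).IsCycle) :
    (q.append p).IsCycle := by
  have h3 := hc.three_le_length
  rw [isCycle_def, isTrail_def, edges_append, tail_support_append] at hc ⊢
  refine ⟨List.nodup_append_comm.1 hc.1, fun h => ?_, List.nodup_append_comm.1 hc.2.2⟩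
  have := congrArg length h
  simp only [length_append, length_nil] at h3 this
  omega

lemma IsCycle.eq_or_eq_of_mem_support_append {p : G.Walk x y} {q : G.Walk y x}
    (hc : (p.append q).IsCycle) {a : V} (hap : a ∈ p.support) (haq : a ∈ q.support) :
    a = x ∨ a = y := by
  by_contra! ha
  have hnd := hc.support_nodup
  rw [tail_support_append] at hnd
  exact List.disjoint_of_nodup_append hnd ((mem_support_iff p).1 hap |>.resolve_left ha.1)
    ((mem_support_iff q).1 haq |>.resolve_left ha.2)

lemma IsCycle.exists_isCycle_append {c : G.Walk v v} (hc : c.IsCycle) (hx : x ∈ c.support)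
    (hy : y ∈ c.support) : ∃ (p : G.Walk x y) (q : G.Walk y x), (p.append q).IsCycle ∧
      (∀ a, a ∈ (p.append q).support ↔ a ∈ c.support) ∧
      (∀ f, f ∈ (p.append q).edges ↔ f ∈ c.edges) := by
  classical
  have hy' : y ∈ (c.rotate x hx).support := (mem_support_rotate_iff ..).2 hy
  refine ⟨(c.rotate x hx).takeUntil y hy', (c.rotate x hx).dropUntil y hy', ?_⟩
  rw [take_spec _ hy']
  exact ⟨hc.rotate hx, fun a => mem_support_rotate_iff .., fun f => (rotate_edges ..).mem_iff⟩

end Walk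

open Walk

lemma isHole_cons_of_isCycle_append {p : G.Walk x y} {q : G.Walk y x}
    (hc : (p.append q).IsCycle) (hxy : G.Adj x y) (hxyc : s(x, y) ∉ (p.append q).edges)
    (hchord : ∀ a ∈ (p.append q).support, ∀ b ∈ (p.append q).support, G.Adj a b →
      s(a, b) ∈ (p.append q).edges ∨ s(a, b) = s(x, y))
    (hp : 3 ≤ p.length) : G.IsHole (cons hxy.symm p) := by
  rw [edges_append, List.mem_append, not_or] at hxyc
  refine ⟨(cons_isCycle_iff p _).2 ⟨hc.isPath_of_append_left (not_nil_of_ne hxy.ne.symm),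
    by rw [Sym2.eq_swap]; exact hxyc.1⟩, by rw [length_cons]; omega, ?_⟩
  have hsupp : ∀ a ∈ (cons hxy.symm p).support, a ∈ p.support := by
    simp only [support_cons, List.mem_cons, forall_eq_or_imp]
    exact ⟨p.end_mem_support, fun _ => id⟩
  intro a b ha hb hab
  replace ha := hsupp a ha
  replace hb := hsupp b hb
  have hab' : s(a, b) ∈ p.edges ∨ s(a, b) = s(x, y) := by
    rcases hchord a ((mem_support_append_iff p q).2 (.inl ha)) b
      ((mem_support_append_iff p q).2 (.inl hb)) hab with h | h
    · rw [edges_append, List.mem_append] at h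
      refine h.imp_right fun hq => ?_
      rcases hc.eq_or_eq_of_mem_support_append ha (q.fst_mem_support_of_mem_edges hq) with
        rfl | rfl <;>
      rcases hc.eq_or_eq_of_mem_support_append hb (q.snd_mem_support_of_mem_edges hq) with
        rfl | rfl
      all_goals first | exact absurd rfl hab.ne | exact Sym2.eq_swap | rfl
    · exact .inr h
  rw [edges_cons, List.mem_cons, Sym2.eq_swap (a := y)]
  exact hab'.symm

lemma HolesEdgeDisjoint.exists_adj_adj_of_chord (hG : G.HolesEdgeDisjoint)
    {c : G.Walk v v} (hc : c.IsCycle) (hx : x ∈ c.support) (hy : y ∈ c.support)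
    (hxy : G.Adj x y) (hxyc : s(x, y) ∉ c.edges)
    (hchord : ∀ a ∈ c.support, ∀ b ∈ c.support, G.Adj a b →
      s(a, b) ∈ c.edges ∨ s(a, b) = s(x, y)) :
    ∃ z, G.Adj x z ∧ G.Adj z y := by
  obtain ⟨p, q, hpq, hsupp, hedges⟩ := hc.exists_isCycle_append hx hy
  simp only [← hsupp, ← hedges] at hchord hxyc
  have hqp := hpq.append_comm
  have hxyc' : s(y, x) ∉ (q.append p).edges := by
    simpa [Sym2.eq_swap, or_comm] using hxyc
  have hchord' : ∀ a ∈ (q.append p).support, ∀ b ∈ (q.append p).support, G.Adj a b →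
      s(a, b) ∈ (q.append p).edges ∨ s(a, b) = s(y, x) := by
    simpa [Sym2.eq_swap (a := y), or_comm] using hchord
  have hp2 := two_le_length_of_ne_of_notMem_edges (p := p) hxy.ne fun h => hxyc (by simp [h])
  have hq2 := two_le_length_of_ne_of_notMem_edges (p := q) hxy.ne.symm fun h => hxyc' (by simp [h])
  obtain hp | hp := hp2.eq_or_lt
  · exact exists_adj_adj_of_length_eq_two hp.symm
  obtain hq | hq := hq2.eq_or_lt
  · obtain ⟨z, hyz, hzx⟩ := exists_adj_adj_of_length_eq_two hq.symm
    exact ⟨z, hzx.symm, hyz.symm⟩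
  exfalso
  have hP := isHole_cons_of_isCycle_append hpq hxy hxyc hchord hp
  have hQ := isHole_cons_of_isCycle_append hqp hxy.symm hxyc' hchord' hq
  rcases hG _ _ hP hQ with hsame | hdisj
  · obtain ⟨f, hf⟩ :=
      List.exists_mem_of_length_pos (l := p.edges) (by rw [length_edges]; omega)
    have hfq := (hsame f).1 (List.mem_cons_of_mem _ hf)
    rw [edges_cons, List.mem_cons] at hfq
    rcases hfq with rfl | hfq
    · exact hxyc (by simp [hf])
    · have hnd := hpq.edges_nodup
      rw [edges_append] at hnd
      exact List.disjoint_of_nodup_append hnd hf hfq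
  · exact hdisj s(x, y) (List.mem_cons.2 (.inl Sym2.eq_swap)) List.mem_cons_self

variable {e : Sym2 V}

lemma IsHole.mem_edges_or_eq_of_deleteEdges {c : (G.deleteEdges {e}).Walk v v}
    (hc : (G.deleteEdges {e}).IsHole c) :
    ∀ a ∈ c.support, ∀ b ∈ c.support, G.Adj a b →
      s(a, b) ∈ c.edges ∨ s(a, b) = e := by
  intro a ha b hb hab
  refine or_iff_not_imp_right.2 fun hne => hc.2.2 a b ha hb ?_
  rw [deleteEdges_adj]
  exact ⟨hab, by simpa using hne⟩

lemma exists_isHole_deleteEdges_not_isHole [Finite V] {u : V} {cH : G.Walk u u}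
    (hH : G.IsHole cH) (he : e ∈ cH.edges)
    (hmany : G.holeEdgeSets.ncard ≤ (G.deleteEdges {e}).holeEdgeSets.ncard) :
    ∃ (v : V) (c : (G.deleteEdges {e}).Walk v v), (G.deleteEdges {e}).IsHole c ∧
      ¬ G.IsHole (c.mapLe (G.deleteEdges_le {e})) := by
  by_contra! h
  refine hmany.not_gt (Set.ncard_lt_ncard ((Set.ssubset_iff_of_subset ?_).2
    ⟨_, ⟨u, cH, hH, rfl⟩, ?_⟩))
  · rintro _ ⟨v, c, hc, rfl⟩
    exact ⟨v, _, h v c hc, by simp⟩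
  · rintro ⟨v, c, -, hE⟩
    have hec : e ∈ c.edges := (Set.ext_iff.1 hE e).1 he
    simpa [edgeSet_deleteEdges] using c.edges_subset_edgeSet hec

lemma IsClique.subset_of_forall_isNonEdgeMaxClique_eq [Finite V] {s K : Set V}
    (hs : G.IsClique s) (h3 : 3 ≤ s.ncard) (huniq : ∀ K', G.IsNonEdgeMaxClique K' → K' = K) :
    s ⊆ K := by
  obtain ⟨K', hsK', hmax⟩ := Finite.exists_le_maximal hs
  have hK' : G.IsMaxClique K' :=
    ⟨hmax.prop, fun L hL hKL => (hmax.le_of_ge hL hKL).antisymm hKL⟩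
  rw [← huniq K' ⟨hK', h3.trans (Set.ncard_le_ncard hsK')⟩]
  exact hsK'

end SimpleGraph

theorem edge_of_clique_of_deleteEdge_has_many_holes_general
    {V : Type*} [Fintype V] (G : SimpleGraph V)
    (h : ℕ) (hh : G.holeEdgeSets.ncard = h)
    (hdisj : G.HolesEdgeDisjoint) (K : Set V)
    (huniq : ∀ K', G.IsNonEdgeMaxClique K' → K' = K)
    {u : V} (cH : G.Walk u u) (hHole : G.IsHole cH)
    (e : Sym2 V) (he : e ∈ cH.edges)
    (hmany : h ≤ ((G.deleteEdges {e}).holeEdgeSets).ncard) :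
    ∃ x y, x ∈ K ∧ y ∈ K ∧ e = s(x, y) := by
  obtain ⟨v, c, hc, hcG⟩ := exists_isHole_deleteEdges_not_isHole hHole he (hh ▸ hmany)
  obtain ⟨x, hx, y, hy, hxy, hxyc⟩ :
      ∃ x ∈ c.support, ∃ y ∈ c.support, G.Adj x y ∧ s(x, y) ∉ c.edges := by
    by_contra! hchordless
    exact hcG ⟨hc.1.mapLe _, by simpa using hc.2.1, fun a b ha hb => by
      simpa using hchordless a (by simpa using ha) b (by simpa using hb)⟩
  have hchord := hc.mem_edges_or_eq_of_deleteEdges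
  obtain rfl := (hchord x hx y hy hxy).resolve_left hxyc
  obtain ⟨z, hxz, hzy⟩ := hdisj.exists_adj_adj_of_chord (hc.1.mapLe (G.deleteEdges_le _))
    (by simpa) (by simpa) hxy (by simpa) (by simpa using hchord)
  have htriangle : G.IsClique {x, y, z} := by
    simp [isClique_insert, hxy, hxz, hzy.symm]
  have hK := htriangle.subset_of_forall_isNonEdgeMaxClique_eq
    (Set.ncard_eq_three.2 ⟨x, y, z, hxy.ne, hxz.ne, hzy.ne.symm, rfl⟩).ge huniq
  exact ⟨x, y, hK (by simp), hK (by simp), rfl⟩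

/-- **Lemma 4, first part.** Let `G` be a connected graph with exactly `h`
pairwise edge-disjoint holes and exactly one non-edge maximal clique `K`, and let `H` be
a hole of `G`. If deleting an edge `e` of `H` leaves at least `h` holes, then `e` is an
edge of `K`. -/
theorem edge_of_clique_of_deleteEdge_has_many_holes
    {V : Type*} [Fintype V] (G : SimpleGraph V) (hconn : G.Connected)
    (h : ℕ) (hh : G.holeEdgeSets.ncard = h)
    (hdisj : G.HolesEdgeDisjoint) (K : Set V)
    (hK : G.IsNonEdgeMaxClique K)
    (huniq : ∀ K', G.IsNonEdgeMaxClique K' → K' = K)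
    {u : V} (cH : G.Walk u u) (hHole : G.IsHole cH)
    (e : Sym2 V) (he : e ∈ cH.edges)
    (hmany : h ≤ ((G.deleteEdges {e}).holeEdgeSets).ncard) :
    ∃ x y, x ∈ K ∧ y ∈ K ∧ e = s(x, y) :=
  edge_of_clique_of_deleteEdge_has_many_holes_general G h hh hdisj K huniq cH hHole e he hmany
end

section
/- Let D_1 and D_2 be acyclic digraphs with disjoint vertex sets. Suppose the competition graph C(D_1) has at least p isolated vertices, forming a set I_p, and D_2 has at least p vertices with no in-neighbors. Then there exists an acyclic digraph D whose competition graph C(D) equals the disjoint union C(D_1) ∪ C(D_2) with the p isolated vertices of I_p removed. -/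
open SimpleGraph

/-!
Delete `I` from `D₁` and send every arc of `D₁` that ends in `I` to a distinct source of `D₂`
instead, via an injection `I → J`. Since this redirection of heads is injective, two surviving
vertices of `D₁` still compete exactly when they did; since the new heads are sources of `D₂`,
no vertex of `D₂` competes with a vertex of `D₁`; and since no arc leads from `D₂` back to
`D₁`, the new digraph is acyclic.
-/

open Function Relation

theorem DigraphAcyclic.mono {V : Type*} {P Q : V → V → Prop} (hQ : DigraphAcyclic Q)
    (hPQ : P ≤ Q) : DigraphAcyclic P :=
  fun x hx => hQ x (TransGen.mono hPQ x x hx)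

theorem DigraphAcyclic.comap {V W : Type*} {D : W → W → Prop} (hD : DigraphAcyclic D)
    (f : V → W) : DigraphAcyclic (D on f) :=
  fun x hx => hD (f x) (hx.lift f fun _ _ h => h)

theorem DigraphAcyclic.sumLex {α β : Type*} {r : α → α → Prop} {s : β → β → Prop}
    (hr : DigraphAcyclic r) (hs : DigraphAcyclic s) : DigraphAcyclic (Sum.Lex r s) := by
  have hlex : TransGen (Sum.Lex r s) ≤ Sum.Lex (TransGen r) (TransGen s) := by
    -- `Sum.Lex` of transitive relations is transitive, so it absorbs `TransGen`.
    rw [← transGen_eq_self (r := Sum.Lex (TransGen r) (TransGen s))]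
    exact TransGen.mono fun _ _ =>
      Sum.Lex.mono (fun _ _ => TransGen.single) (fun _ _ => TransGen.single)
  rintro (x | x) hx
  · exact hr x (Sum.lex_inl_inl.mp (hlex _ _ hx))
  · exact hs x (Sum.lex_inr_inr.mp (hlex _ _ hx))

section Paste

variable {α β V : Type*} (D₁ : V → V → Prop) (D₂ : β → β → Prop) (ι : α → V) (g : V → α ⊕ β)

def pasteDigraph : α ⊕ β → α ⊕ β → Prop
  | .inl x, b => ∃ v, D₁ (ι x) v ∧ g v = b
  | .inr u, .inr w => D₂ u w
  | .inr _, .inl _ => False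

variable {D₁ D₂ ι g}

theorem pasteDigraph_le_sumLex (hg : Injective g) (hgι : ∀ x, g (ι x) = .inl x) :
    pasteDigraph D₁ D₂ ι g ≤ Sum.Lex (D₁ on ι) D₂ := by
  rintro (x | u) (y | w) h
  · obtain ⟨v, hxv, hv⟩ := h
    obtain rfl : v = ι y := hg (hv.trans (hgι y).symm)
    exact Sum.Lex.inl hxv
  · exact Sum.Lex.sep x w
  · exact h.elim
  · exact Sum.Lex.inr h

theorem DigraphAcyclic.pasteDigraph (hD₁ : DigraphAcyclic D₁) (hD₂ : DigraphAcyclic D₂)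
    (hg : Injective g) (hgι : ∀ x, g (ι x) = .inl x) :
    DigraphAcyclic (pasteDigraph D₁ D₂ ι g) :=
  ((hD₁.comap ι).sumLex hD₂).mono (pasteDigraph_le_sumLex hg hgι)

theorem competitionGraph_pasteDigraph (hι : Injective ι) (hg : Injective g)
    (hsrc : ∀ v u, g v = .inr u → ∀ w, ¬ D₂ w u) :
    competitionGraph (pasteDigraph D₁ D₂ ι g) =
      (competitionGraph D₁).comap ι ⊕g competitionGraph D₂ := by
  ext (x | u) (y | w) <;> simp only [competitionGraph, sum_adj, comap_adj]
  · rw [Sum.inl_injective.ne_iff, hι.ne_iff]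
    refine and_congr_right fun _ => ⟨?_, ?_⟩
    · rintro ⟨-, ⟨v, hxv, rfl⟩, v', hyv', hv'⟩
      exact ⟨v, hxv, hg hv' ▸ hyv'⟩
    · rintro ⟨v, hxv, hyv⟩
      exact ⟨g v, ⟨v, hxv, rfl⟩, v, hyv, rfl⟩
  · refine iff_false_intro ?_
    rintro ⟨-, c | c, ⟨v, -, hv⟩, hwc⟩
    · exact hwc
    · exact hsrc v c hv w hwc
  · refine iff_false_intro ?_
    rintro ⟨-, c | c, huc, ⟨v, -, hv⟩⟩
    · exact huc
    · exact hsrc v c hv u huc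
  · rw [Sum.inr_injective.ne_iff]
    refine and_congr_right fun _ => ⟨?_, fun ⟨v, huv, hwv⟩ => ⟨.inr v, huv, hwv⟩⟩
    rintro ⟨c | c, huc, hwc⟩
    · exact huc.elim
    · exact ⟨c, huc, hwc⟩

end Paste

theorem exists_injective_relabeling {V₁ V₂ : Type*} (I : Finset V₁) (J : Finset V₂)
    (hIJ : I.card ≤ J.card) :
    ∃ g : V₁ → ↥{x : V₁ | x ∉ I} ⊕ V₂, Injective g ∧ (∀ x : ↥{x : V₁ | x ∉ I}, g x = .inl x) ∧
      ∀ v u, g v = .inr u → u ∈ J := by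
  classical
  obtain ⟨f⟩ : Nonempty (I ↪ J) := Function.Embedding.nonempty_of_card_le (by simpa using hIJ)
  refine ⟨fun v => if h : v ∈ I then .inr (f ⟨v, h⟩) else .inl ⟨v, h⟩, ?_, ?_, ?_⟩
  · intro v v' h
    by_cases hv : v ∈ I <;> by_cases hv' : v' ∈ I <;> simp [hv, hv'] at h <;> exact h
  · intro x
    exact dif_neg x.2
  · intro v u h
    by_cases hv : v ∈ I <;> simp [hv] at h
    exact h ▸ (f ⟨v, hv⟩).2

theorem pasting_acyclic_digraphs_general
    {V₁ V₂ : Type*}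
    (D₁ : V₁ → V₁ → Prop) (D₂ : V₂ → V₂ → Prop)
    (hD₁ : DigraphAcyclic D₁) (hD₂ : DigraphAcyclic D₂)
    (p : ℕ) (I : Finset V₁) (hI : I.card = p)
    (J : Finset V₂) (hJ : J.card = p) (hJin : ∀ u ∈ J, ∀ w, ¬ D₂ w u) :
    ∃ D : (↥{x : V₁ | x ∉ I} ⊕ V₂) → (↥{x : V₁ | x ∉ I} ⊕ V₂) → Prop,
      DigraphAcyclic D ∧
      competitionGraph D =
        ((competitionGraph D₁).induce {x : V₁ | x ∉ I}) ⊕g (competitionGraph D₂) := by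
  obtain ⟨g, hg, hgι, hgJ⟩ := exists_injective_relabeling I J (hI.trans hJ.symm).le
  exact ⟨pasteDigraph D₁ D₂ Subtype.val g, hD₁.pasteDigraph hD₂ hg hgι,
    competitionGraph_pasteDigraph Subtype.val_injective hg fun v u hu => hJin u (hgJ v u hu)⟩

/-- **Lemma 5.** Given vertex-disjoint acyclic digraphs `D₁`, `D₂` such that
`C(D₁)` has `p` isolated vertices forming a set `I` and `D₂` has `p` vertices with no
in-neighbors, there is an acyclic digraph `D` with
`C(D) = C(D₁) ∪ C(D₂) - I`. -/
theorem pasting_acyclic_digraphs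
    {V₁ V₂ : Type*} [Fintype V₁] [Fintype V₂]
    (D₁ : V₁ → V₁ → Prop) (D₂ : V₂ → V₂ → Prop)
    (hD₁ : DigraphAcyclic D₁) (hD₂ : DigraphAcyclic D₂)
    (p : ℕ) (I : Finset V₁) (hI : I.card = p)
    (hIiso : ∀ i ∈ I, ∀ y, ¬ (competitionGraph D₁).Adj i y)
    (J : Finset V₂) (hJ : J.card = p) (hJin : ∀ u ∈ J, ∀ w, ¬ D₂ w u) :
    ∃ D : (↥{x : V₁ | x ∉ I} ⊕ V₂) → (↥{x : V₁ | x ∉ I} ⊕ V₂) → Prop,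
      DigraphAcyclic D ∧
      competitionGraph D =
        ((competitionGraph D₁).induce {x : V₁ | x ∉ I}) ⊕g (competitionGraph D₂) :=
  pasting_acyclic_digraphs_general D₁ D₂ hD₁ hD₂ p I hI J hJ hJin
end

section
/- Let G be a connected triangle-free graph having exactly one hole H. Then for every edge e of G, the competition number of G − e satisfies k(G − e) ≤ 1. -/
open SimpleGraph

/-!
Every cycle of `G` has the edges of the hole `H`: otherwise a shortest offending cycle `C` has a
chord, which splits it into two shorter cycles; both then have the edges of `H`, so `C` has all
edges of `H` but the chord and is shorter than `H`, yet longer than either half. Hence `G - f` is a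
tree for every edge `f` of `H`. If `e` lies on `H`, then `G - e` is a tree. Otherwise, for an edge
`ab` of `H`, `G - e` is the two-component forest `(G - ab) - e` plus the edge `ab`.

A tree, or such a forest plus an edge, has competition number at most one: list the vertices
component by component by distance from a root, give every forest edge its farther endpoint and
the extra edge the root of the second component, and let each edge prey on the vertex following
the one it was given (the new isolated vertex after the last one).
-/

section CompetitionNumber

variable {V : Type*}

open Function

theorem competitionNumber_le_of_prey {k : ℕ} (G : SimpleGraph V) (prey : Sym2 V → V ⊕ Fin k)
    (rank : V ⊕ Fin k → ℕ) (hprey : Set.InjOn prey G.edgeSet)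
    (hrank : ∀ ⦃x y⦄, G.Adj x y → rank (.inl x) < rank (prey s(x, y))) :
    competitionNumber G ≤ k := by
  let D : V ⊕ Fin k → V ⊕ Fin k → Prop :=
    fun p q ↦ ∃ x y, G.Adj x y ∧ p = .inl x ∧ q = prey s(x, y)
  refine Nat.sInf_le ⟨D, fun p hp ↦ ?_, ?_⟩
  · have := Relation.TransGen.lift rank (p := (· < ·))
      (by rintro _ _ ⟨x, y, h, rfl, rfl⟩; exact hrank h) p p hp
    rw [Relation.transGen_eq_self] at this
    exact lt_irrefl _ this
  · ext p q
    constructor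
    · rintro ⟨hne, w, ⟨x₁, y₁, h₁, rfl, rfl⟩, ⟨x₂, y₂, h₂, rfl, hw⟩⟩
      rcases Sym2.eq_iff.1 (hprey h₁ h₂ hw) with ⟨rfl, rfl⟩ | ⟨rfl, rfl⟩
      · exact absurd rfl hne
      · exact ⟨x₁, y₁, h₁, rfl, rfl⟩
    · rintro ⟨x, y, h, rfl, rfl⟩
      exact ⟨by simpa using h.ne, prey s(x, y), ⟨x, y, h, rfl, rfl⟩,
        ⟨y, x, h.symm, rfl, by rw [Sym2.eq_swap]⟩⟩

variable [Fintype V]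

theorem exists_injective_succ (key : V → ℕ) (hkey : Injective key) :
    ∃ (s : V → V ⊕ Fin 1) (rank : V ⊕ Fin 1 → ℕ), Injective s ∧
      (∀ v, rank (.inl v) = key v) ∧ ∀ v, key v < rank (s v) := by
  classical
  let rank : V ⊕ Fin 1 → ℕ := Sum.elim key fun _ ↦ Finset.univ.sup key + 1
  have hmin (v : V) := Finset.exists_min_image (Finset.univ.filter (key v < rank ·)) rank
    ⟨.inr 0, by simpa [rank] using Nat.lt_succ_of_le (Finset.le_sup (Finset.mem_univ v))⟩
  choose s hs hmin using hmin
  simp only [Finset.mem_filter, Finset.mem_univ, true_and] at hs hmin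
  -- the successor of the smaller of two keys is bounded by the larger one
  have key_le (v₁ v₂ : V) (h : s v₁ = s v₂) : key v₂ ≤ key v₁ := by
    by_contra! hlt
    have := hmin v₁ (.inl v₂) hlt
    rw [h] at this
    exact (hs v₂).not_ge this
  exact ⟨s, rank, fun v₁ v₂ h ↦ hkey ((key_le _ _ h.symm).antisymm (key_le _ _ h)),
    fun _ ↦ rfl, hs⟩

theorem competitionNumber_le_one_of_key (G : SimpleGraph V) (key : V → ℕ)
    (hkey : Injective key) (θ : Sym2 V → V) (hθ : Set.InjOn θ G.edgeSet)
    (hdom : ∀ ⦃x y⦄, G.Adj x y → key x ≤ key (θ s(x, y))) : competitionNumber G ≤ 1 := by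
  obtain ⟨s, rank, hs, hrank, hlt⟩ := exists_injective_succ key hkey
  refine competitionNumber_le_of_prey G (s ∘ θ) rank (hs.comp_injOn hθ) fun x y h ↦ ?_
  rw [hrank]
  exact (hdom h).trans_lt (hlt _)

end CompetitionNumber

section Ordering

variable {V : Type*}

open Function

def upperEnd (key : V → ℕ) (hkey : Injective key) : Sym2 V → V :=
  Sym2.lift ⟨fun u v ↦ if key u ≤ key v then v else u, fun u v ↦ by
    rcases lt_trichotomy (key u) (key v) with h | h | h
    · simp [h.le, h.not_ge]
    · simp [hkey h]
    · simp [h.le, h.not_ge]⟩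

variable {key : V → ℕ} {hkey : Injective key}

theorem key_le_upperEnd (x y : V) : key x ≤ key (upperEnd key hkey s(x, y)) := by
  simp only [upperEnd, Sym2.lift_mk]
  split_ifs with h
  · exact h
  · exact le_rfl

theorem exists_eq_upperEnd {e : Sym2 V} (he : ¬e.IsDiag) :
    ∃ a, e = s(a, upperEnd key hkey e) ∧ key a < key (upperEnd key hkey e) := by
  induction e using Sym2.ind with | _ x y => ?_
  simp only [upperEnd, Sym2.lift_mk]
  split_ifs with h
  · exact ⟨x, rfl, h.lt_of_ne (hkey.ne (by simpa using he))⟩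
  · exact ⟨y, Sym2.eq_swap, not_le.1 h⟩

variable {F : SimpleGraph V}

theorem injOn_upperEnd (hpar : ∀ ⦃u₁ u₂ v⦄, F.Adj u₁ v → F.Adj u₂ v → key u₁ < key v →
      key u₂ < key v → u₁ = u₂) :
    Set.InjOn (upperEnd key hkey) F.edgeSet := by
  intro e₁ he₁ e₂ he₂ h
  obtain ⟨a₁, h₁, hlt₁⟩ := exists_eq_upperEnd (hkey := hkey) (F.not_isDiag_of_mem_edgeSet he₁)
  obtain ⟨a₂, h₂, hlt₂⟩ := exists_eq_upperEnd (hkey := hkey) (F.not_isDiag_of_mem_edgeSet he₂)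
  rw [h₁, h] at he₁
  rw [h₂] at he₂
  rw [h] at hlt₁
  have ha : a₁ = a₂ := hpar he₁ he₂ hlt₁ hlt₂
  rw [h₁, h, ha, ← h₂]

theorem upperEnd_ne_of_forall_adj {z : V} (hz : ∀ ⦃w⦄, F.Adj w z → key z < key w) {e : Sym2 V}
    (he : e ∈ F.edgeSet) : upperEnd key hkey e ≠ z := by
  obtain ⟨a, h, hlt⟩ := exists_eq_upperEnd (hkey := hkey) (F.not_isDiag_of_mem_edgeSet he)
  rw [h] at he
  rintro rfl
  exact (hz he).not_gt hlt

variable [Fintype V]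

noncomputable def lexKey (f : V → ℕ) (v : V) : ℕ :=
  f v * Fintype.card V + Fintype.equivFin V v

theorem lexKey_injective (f : V → ℕ) : Injective (lexKey f) := by
  intro u v h
  have hmod := congrArg (· % Fintype.card V) h
  simp only [lexKey, Nat.mul_add_mod_of_lt (Fin.isLt _)] at hmod
  exact (Fintype.equivFin V).injective (Fin.ext hmod)

theorem lexKey_lt_lexKey {f : V → ℕ} {u v : V} (h : f u < f v) : lexKey f u < lexKey f v := by
  have hu := (Fintype.equivFin V u).isLt
  unfold lexKey
  nlinarith

theorem le_of_lexKey_lt {f : V → ℕ} {u v : V} (h : lexKey f u < lexKey f v) : f u ≤ f v :=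
  not_lt.1 fun h' ↦ (lexKey_lt_lexKey h').not_gt h

end Ordering

namespace SimpleGraph

variable {V : Type*} {G F : SimpleGraph V}

theorem CliqueFree.four_le_length_of_isCycle (htf : G.CliqueFree 3) {v : V} {c : G.Walk v v}
    (hc : c.IsCycle) : 4 ≤ c.length := by
  by_contra! h
  obtain ⟨s, hs⟩ :=
    is3Clique_iff_exists_cycle_length_three.2 ⟨v, c, hc, by have := hc.three_le_length; omega⟩
  exact htf s hs

theorem Walk.IsCycle.exists_isCycle_of_isChord {v x y : V} {c : G.Walk v v} (hc : c.IsCycle)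
    (h : c.IsChord s(x, y)) :
    ∃ (c₁ : G.Walk x x) (c₂ : G.Walk y y), c₁.IsCycle ∧ c₂.IsCycle ∧ s(x, y) ∈ c₁.edges ∧
      c₁.length < c.length ∧ c₂.length < c.length ∧ c.edges ⊆ c₁.edges ++ c₂.edges := by
  classical
  obtain ⟨hadj, hchord, hx, hy⟩ := isChord_sym2Mk.1 h
  have hc' := hc.rotate hx
  have hy' : y ∈ (c.rotate x hx).support := (c.mem_support_rotate_iff x hx).2 hy
  have hspec := (c.rotate x hx).take_spec hy'
  set p := (c.rotate x hx).takeUntil y hy'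
  set q := (c.rotate x hx).dropUntil y hy'
  have hp : p.IsPath := hc'.isPath_takeUntil hy'
  have hq : q.IsPath := (hspec ▸ hc').isPath_of_append_right (not_nil_of_ne hadj.ne)
  have hedges : ∀ f, f ∈ c.edges ↔ f ∈ p.edges ∨ f ∈ q.edges := fun f ↦ by
    rw [← (c.rotate_edges x hx).mem_iff, ← hspec, edges_append, List.mem_append]
  have hlen : p.length + q.length = c.length := by
    rw [← length_append, hspec, length_rotate]
  have hc₁ : (cons hadj q).IsCycle :=
    (cons_isCycle_iff q hadj).2 ⟨hq, fun h ↦ hchord ((hedges _).2 (.inr h))⟩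
  have hc₂ : (cons hadj.symm p).IsCycle :=
    (cons_isCycle_iff p hadj.symm).2
      ⟨hp, fun h ↦ hchord ((hedges _).2 (.inl (by rwa [Sym2.eq_swap])))⟩
  have h₁ := hc₁.three_le_length
  have h₂ := hc₂.three_le_length
  simp only [length_cons] at h₁ h₂
  refine ⟨_, _, hc₁, hc₂, List.mem_cons_self, by simp only [length_cons]; omega,
    by simp only [length_cons]; omega, fun f hf ↦ ?_⟩
  rcases (hedges f).1 hf with hf | hf <;> simp [hf]

theorem CliqueFree.mem_edges_iff_of_forall_isHole (htf : G.CliqueFree 3) {u : V}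
    {cH : G.Walk u u} (hH : cH.IsCycle)
    (huniq : ∀ ⦃w⦄ (c : G.Walk w w), G.IsHole c → ∀ f, f ∈ c.edges ↔ f ∈ cH.edges)
    {w : V} {c : G.Walk w w} (hc : c.IsCycle) : ∀ f, f ∈ c.edges ↔ f ∈ cH.edges := by
  classical
  induction hlen : c.length using Nat.strong_induction_on generalizing w c with | _ n ih => ?_
  by_cases hchordless : c.IsChordless
  · exact huniq c ⟨hc, htf.four_le_length_of_isCycle hc,
      fun x y hx hy h ↦ hchordless.mem_edges hx hy h⟩
  exfalso
  obtain ⟨e, he⟩ : ∃ e, c.IsChord e := by simpa [Walk.IsChordless] using hchordless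
  induction e using Sym2.ind with | _ x y => ?_
  obtain ⟨c₁, c₂, hc₁, hc₂, hxy, hl₁, hl₂, hcover⟩ := hc.exists_isCycle_of_isChord he
  have hE₁ := ih _ (hlen ▸ hl₁) hc₁ rfl
  have hE₂ := ih _ (hlen ▸ hl₂) hc₂ rfl
  -- both halves have the edges of `cH`, so `c` has all of them except the chord
  have hsub : c.edges ⊆ cH.edges.erase s(x, y) := fun f hf ↦ by
    refine (List.mem_erase_of_ne fun h : f = s(x, y) ↦ he.2.1 (h ▸ hf)).2 ?_
    rcases List.mem_append.1 (hcover hf) with h | h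
    exacts [(hE₁ f).1 h, (hE₂ f).1 h]
  have h₁ := (List.subperm_of_subset hc.edges_nodup hsub).length_le
  have h₂ := (List.subperm_of_subset hH.edges_nodup fun f hf ↦ (hE₁ f).2 hf).length_le
  rw [List.length_erase_of_mem ((hE₁ _).1 hxy)] at h₁
  simp only [Walk.length_edges] at h₁ h₂
  omega

theorem IsHole.mem_edges_iff_of_ncard_holeEdgeSets_eq_one (hh : G.holeEdgeSets.ncard = 1)
    {u v : V} {c₁ : G.Walk u u} {c₂ : G.Walk v v} (h₁ : G.IsHole c₁) (h₂ : G.IsHole c₂)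
    (f : Sym2 V) : f ∈ c₁.edges ↔ f ∈ c₂.edges := by
  obtain ⟨E, hE⟩ := Set.ncard_eq_one.1 hh
  have m₁ : {g | g ∈ c₁.edges} ∈ G.holeEdgeSets := ⟨u, c₁, h₁, rfl⟩
  have m₂ : {g | g ∈ c₂.edges} ∈ G.holeEdgeSets := ⟨v, c₂, h₂, rfl⟩
  rw [hE, Set.mem_singleton_iff] at m₁ m₂
  exact Set.ext_iff.1 (m₁.trans m₂.symm) f

theorem Connected.isTree_deleteEdges {e : Sym2 V} (hG : G.Connected) {w : V} {c : G.Walk w w}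
    (hc : c.IsCycle) (he : e ∈ c.edges)
    (hall : ∀ ⦃u⦄ (c' : G.Walk u u), c'.IsCycle → e ∈ c'.edges) : (G.deleteEdges {e}).IsTree := by
  induction e using Sym2.ind with | _ x y => ?_
  refine ⟨hG.connected_delete_edge_of_not_isBridge fun hb ↦ hb.notMem_edges_of_isCycle hc he,
    fun u c' hc' ↦ ?_⟩
  have := hall _ (hc'.mapLe (deleteEdges_le _))
  rw [Walk.edges_mapLe_eq_edges] at this
  simpa [edgeSet_deleteEdges] using c'.edges_subset_edgeSet this

theorem Reachable.deleteEdges_or {x y v : V} (h : G.Reachable v x) :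
    (G.deleteEdges {s(x, y)}).Reachable v x ∨ (G.deleteEdges {s(x, y)}).Reachable v y := by
  classical
  obtain ⟨p, hp⟩ : ∃ p : G.Walk v x, p.IsPath := ⟨_, h.some.bypass_isPath⟩
  by_cases hxy : s(x, y) ∈ p.edges
  · -- the part of `p` before it first reaches `y` avoids `x`, hence the edge `xy`
    have hy := p.snd_mem_support_of_mem_edges hxy
    have hx := Walk.endpoint_notMem_support_takeUntil hp hy (p.adj_of_mem_edges hxy).ne
    refine .inr ⟨(p.takeUntil y hy).toDeleteEdges _ fun f hf hfe ↦ hx ?_⟩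
    rw [Set.mem_singleton_iff.1 hfe] at hf
    exact Walk.fst_mem_support_of_mem_edges _ hf
  · exact .inl ⟨p.toDeleteEdges _ fun f hf hfe ↦ hxy (Set.mem_singleton_iff.1 hfe ▸ hf)⟩

theorem IsAcyclic.eq_penultimate_of_dist_le (hF : F.IsAcyclic) {r u v : V} {P : F.Walk r v}
    (hP : P.IsPath) (hadj : F.Adj u v) (hr : F.Reachable r u) (hle : F.dist r u ≤ F.dist r v) :
    u = P.penultimate := by
  classical
  obtain ⟨p, hp, hpl⟩ := hr.exists_path_of_dist
  have hv : v ∉ p.support := by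
    intro hv
    have hsplit := congrArg Walk.length (p.take_spec hv)
    have hdrop : 0 < (p.dropUntil v hv).length :=
      Walk.not_nil_iff_lt_length.1 (Walk.not_nil_of_ne hadj.ne.symm)
    have := F.dist_le (p.takeUntil v hv)
    rw [Walk.length_append] at hsplit
    omega
  exact hF.eq_penultimate_of_adj_end hP hadj.symm
    (hF.mem_support_of_ne_mem_support_of_adj_of_isPath hP hp hadj.symm hv)

variable [Fintype V]

open scoped Classical in
/-- The offset `Fintype.card V` exceeds every distance, so the component of `a` comes first. -/
noncomputable def forestHeight (F : SimpleGraph V) (a z : V) (v : V) : ℕ :=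
  if F.Reachable a v then F.dist a v else Fintype.card V + F.dist z v

variable {a z : V}

theorem exists_forestHeight_eq_add_dist (hcover : ∀ v, F.Reachable a v ∨ F.Reachable z v)
    (v : V) :
    ∃ r c, ∀ w, F.Reachable v w → F.Reachable r w ∧ F.forestHeight a z w = c + F.dist r w := by
  by_cases hav : F.Reachable a v
  · exact ⟨a, 0, fun w hw ↦ ⟨hav.trans hw, by simp [forestHeight, hav.trans hw]⟩⟩
  · refine ⟨z, Fintype.card V, fun w hw ↦ ?_⟩
    have haw : ¬F.Reachable a w := fun h ↦ hav (h.trans hw.symm)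
    exact ⟨(hcover w).resolve_left haw, by simp [forestHeight, haw]⟩

theorem IsAcyclic.eq_of_adj_of_lexKey_forestHeight_lt (hF : F.IsAcyclic)
    (hcover : ∀ v, F.Reachable a v ∨ F.Reachable z v) ⦃u₁ u₂ v : V⦄ (h₁ : F.Adj u₁ v)
    (h₂ : F.Adj u₂ v) (hlt₁ : lexKey (F.forestHeight a z) u₁ < lexKey (F.forestHeight a z) v)
    (hlt₂ : lexKey (F.forestHeight a z) u₂ < lexKey (F.forestHeight a z) v) : u₁ = u₂ := by
  obtain ⟨r, c, hrc⟩ := exists_forestHeight_eq_add_dist hcover v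
  obtain ⟨hrv, hv⟩ := hrc v .rfl
  obtain ⟨P, hP, -⟩ := hrv.exists_path_of_dist
  have hparent (u : V) (hu : F.Adj u v)
      (hlt : lexKey (F.forestHeight a z) u < lexKey (F.forestHeight a z) v) :
      u = P.penultimate := by
    obtain ⟨hru, hu'⟩ := hrc u hu.symm.reachable
    have := le_of_lexKey_lt hlt
    exact hF.eq_penultimate_of_dist_le hP hu hru (by omega)
  rw [hparent u₁ h₁ hlt₁, hparent u₂ h₂ hlt₂]

end SimpleGraph

section Forest

variable {V : Type*} [Fintype V]

theorem competitionNumber_le_one_of_isTree {T : SimpleGraph V} (hT : T.IsTree) :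
    competitionNumber T ≤ 1 := by
  obtain ⟨a⟩ := hT.connected.nonempty
  have hcover (v : V) : T.Reachable a v ∨ T.Reachable a v := .inl (hT.connected a v)
  have hkey := lexKey_injective (T.forestHeight a a)
  exact competitionNumber_le_one_of_key T _ hkey (upperEnd _ hkey)
    (injOn_upperEnd (hT.isAcyclic.eq_of_adj_of_lexKey_forestHeight_lt hcover))
    fun x y _ ↦ key_le_upperEnd x y

/-- Listing the component of `F` containing `ab` first, the extra edge `ab` is assigned the root
`z` of the other component, which is the upper end of no edge of `F`. -/
theorem competitionNumber_le_one_of_le_sup_edge {G F : SimpleGraph V} {a b x y : V}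
    (hG : G.deleteEdges {s(a, b)} ≤ F) (hF : F.IsAcyclic) (hab : F.Reachable a b)
    (hxy : ¬F.Reachable x y) (hcover : ∀ v, F.Reachable x v ∨ F.Reachable y v) :
    competitionNumber G ≤ 1 := by
  obtain ⟨z, haz, hcover'⟩ : ∃ z, ¬F.Reachable a z ∧ ∀ v, F.Reachable a v ∨ F.Reachable z v := by
    rcases hcover a with hxa | hya
    · exact ⟨y, fun h ↦ hxy (hxa.trans h), fun v ↦ (hcover v).imp_left hxa.symm.trans⟩
    · exact ⟨x, fun h ↦ hxy (hya.trans h).symm, fun v ↦ (hcover v).symm.imp_left hya.symm.trans⟩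
  classical
  set key := lexKey (F.forestHeight a z)
  have hkey : Function.Injective key := lexKey_injective _
  have hz : ∀ ⦃w⦄, F.Adj w z → key z < key w := by
    intro w hw
    have haw : ¬F.Reachable a w := fun h ↦ haz (h.trans hw.reachable)
    refine lexKey_lt_lexKey ?_
    simp only [forestHeight, haz, haw, if_false, dist_self]
    have := hw.symm.reachable.pos_dist_of_ne hw.ne.symm
    omega
  have hlt_z : ∀ ⦃v⦄, F.Reachable a v → key v < key z := by
    intro v hv
    refine lexKey_lt_lexKey ?_
    obtain ⟨p, hp, hpl⟩ := hv.exists_path_of_dist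
    simp only [forestHeight, hv, haz, if_true, if_false, dist_self]
    exact hpl ▸ hp.length_lt
  let θ := Function.update (upperEnd key hkey) s(a, b) z
  have hθ : Set.InjOn θ (F.edgeSet \ {s(a, b)}) := by
    refine (injOn_upperEnd (hkey := hkey) (hF.eq_of_adj_of_lexKey_forestHeight_lt hcover')).mono
      Set.sdiff_subset |>.congr fun e he ↦ ?_
    exact (Function.update_of_ne he.2 _ _).symm
  refine competitionNumber_le_one_of_key G key hkey θ ?_ fun u v _ ↦ ?_
  · refine ((Set.injOn_insert fun h ↦ h.2 rfl).2 ⟨hθ, ?_⟩).mono fun e he ↦ ?_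
    · rintro ⟨e, he, hez⟩
      simp only [θ, Function.update_self, Function.update_of_ne he.2] at hez
      exact upperEnd_ne_of_forall_adj hz he.1 hez
    · by_cases heab : e = s(a, b)
      · exact .inl heab
      · exact .inr ⟨edgeSet_mono hG (by rw [edgeSet_deleteEdges]; exact ⟨he, heab⟩), heab⟩
  · by_cases heab : s(u, v) = s(a, b)
    · simp only [θ, heab, Function.update_self]
      have hu : u = a ∨ u = b := by
        rcases Sym2.eq_iff.1 heab with ⟨rfl, -⟩ | ⟨rfl, -⟩ <;> simp
      exact (hlt_z (hu.elim (fun h ↦ h ▸ .rfl) (fun h ↦ h ▸ hab))).le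
    · simp only [θ, Function.update_of_ne heab]
      exact key_le_upperEnd u v

theorem competitionNumber_deleteEdges_le_one_of_isTree {G : SimpleGraph V} {a b x y w : V}
    {c : G.Walk w w} (hT : (G.deleteEdges {s(a, b)}).IsTree) (hc : c.IsCycle)
    (hab : s(a, b) ∈ c.edges) (hxy : G.Adj x y) (hxyc : s(x, y) ∉ c.edges) :
    competitionNumber (G.deleteEdges {s(x, y)}) ≤ 1 := by
  have hxyT : (G.deleteEdges {s(a, b)}).Adj x y := by
    rw [deleteEdges_adj]
    exact ⟨hxy, fun h ↦ hxyc (Set.mem_singleton_iff.1 h ▸ hab)⟩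
  have hF : (G.deleteEdges {s(x, y)}).deleteEdges {s(a, b)} =
      (G.deleteEdges {s(a, b)}).deleteEdges {s(x, y)} := by
    simp only [deleteEdges_deleteEdges, Set.union_comm]
  -- `(G - xy) - ab` is the tree `G - ab` minus its edge `xy`
  refine competitionNumber_le_one_of_le_sup_edge hF.le (hT.isAcyclic.anti (deleteEdges_le _)) ?_
    (isBridge_iff.1 (isAcyclic_iff_forall_adj_isBridge.1 hT.isAcyclic hxyT))
    fun v ↦ (hT.connected v x).deleteEdges_or.imp .symm .symm
  rw [← hF]
  exact (adj_and_reachable_delete_edges_iff_exists_cycle.2 ⟨w, c.toDeleteEdges {s(x, y)}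
    (fun f hf hfxy ↦ hxyc (by simp_all)), Walk.IsCycle.toDeleteEdges (G := G) _ hc _,
    by simpa⟩).2

end Forest

/-- If `G` is a connected triangle-free graph with exactly one hole `H`,
then `k(G - e) ≤ 1` for every edge `e` of `G`. -/
theorem competitionNumber_deleteEdge_le_one_of_unique_hole
    {V : Type*} [Fintype V] (G : SimpleGraph V) (hconn : G.Connected)
    (htf : G.CliqueFree 3)
    {u : V} (cH : G.Walk u u) (hHole : G.IsHole cH)
    (hh : G.holeEdgeSets.ncard = 1)
    (e : Sym2 V) (he : e ∈ G.edgeSet) :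
    competitionNumber (G.deleteEdges {e}) ≤ 1 := by
  have hcycle ⦃w : V⦄ (c : G.Walk w w) (hc : c.IsCycle) (f : Sym2 V) (hf : f ∈ cH.edges) :
      f ∈ c.edges :=
    (htf.mem_edges_iff_of_forall_isHole hHole.1
      (fun _ _ h ↦ h.mem_edges_iff_of_ncard_holeEdgeSets_eq_one hh hHole) hc f).2 hf
  have htree (f : Sym2 V) (hf : f ∈ cH.edges) : (G.deleteEdges {f}).IsTree :=
    hconn.isTree_deleteEdges hHole.1 hf fun _ c hc ↦ hcycle c hc f hf
  by_cases heH : e ∈ cH.edges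
  · exact competitionNumber_le_one_of_isTree (htree e heH)
  obtain ⟨f, hf⟩ := List.exists_mem_of_length_pos (l := cH.edges)
    (by rw [Walk.length_edges]; have := hHole.2.1; omega)
  induction e using Sym2.ind with | _ x y => ?_
  induction f using Sym2.ind with | _ a b => ?_
  exact competitionNumber_deleteEdges_le_one_of_isTree (htree _ hf) hHole.1 hf he heH
end

section
/- Let G be a connected triangle-free graph having exactly one hole H. Then for every edge e of H, the graph G − e contains no cycle (i.e., G − e is a forest). -/
open SimpleGraph

/-! A shortest cycle `c` of `G - e` is chordless in `G - e`, so the only possible chord of `c`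
in `G` is `e`. If `e` is not a chord, then `c` is a hole of `G` (triangle-freeness gives length
at least 4) avoiding `e`, so it differs from `H`. If `e = ab` is a chord, it splits `c` into two
cycles through `ab`; both are holes of `G`, and their edge sets differ. Either way `G` has two
holes with different edge sets. -/

namespace SimpleGraph

variable {V : Type*} {G : SimpleGraph V} {a b v x y w : V}

namespace Walk

lemma mem_edges_of_length_eq_one_s11 : ∀ {p : G.Walk a b}, p.length = 1 → s(a, b) ∈ p.edges
  | cons _ nil, _ => by simp

lemma isChord_reverse {c : G.Walk v w} {e : Sym2 V} : c.reverse.IsChord e ↔ c.IsChord e := by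
  induction e using Sym2.ind
  simp [isChord_sym2Mk]

lemma IsCycle.four_le_length_of_cliqueFree_three (htf : G.CliqueFree 3) {c : G.Walk v v}
    (hc : c.IsCycle) : 4 ≤ c.length := by
  by_contra! hlt
  have h3 : c.length = 3 := by have := hc.three_le_length; omega
  obtain ⟨s, hs⟩ := is3Clique_iff_exists_cycle_length_three.mpr ⟨v, c, hc, h3⟩
  exact htf s hs

lemma IsCycle.isHole (htf : G.CliqueFree 3) {c : G.Walk v v} (hc : c.IsCycle)
    (hcl : c.IsChordless) : G.IsHole c :=
  ⟨hc, hc.four_le_length_of_cliqueFree_three htf, fun _ _ hx hy hxy => hcl.mem_edges hx hy hxy⟩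

lemma IsCycle.exists_append_isCycle {c : G.Walk v v} (hc : c.IsCycle) (hx : x ∈ c.support)
    (hy : y ∈ c.support) :
    ∃ (p : G.Walk x y) (q : G.Walk y x), (p.append q).IsCycle ∧
      (p.append q).length = c.length ∧ ∀ e, (p.append q).IsChord e ↔ c.IsChord e := by
  classical
  set d := c.rotate x hx
  have hy' : y ∈ d.support := (c.mem_support_rotate_iff x hx).mpr hy
  refine ⟨d.takeUntil y hy', d.dropUntil y hy', ?_⟩
  rw [take_spec]
  refine ⟨hc.rotate hx, c.length_rotate x hx, fun e => ?_⟩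
  induction e using Sym2.ind
  simp only [isChord_sym2Mk, d, mem_support_rotate_iff, (c.rotate_edges x hx).perm.mem_iff]

lemma IsCycle.eq_or_eq_of_mem_support_append_s11 {p : G.Walk a b} {q : G.Walk b a}
    (hpq : (p.append q).IsCycle) (hwp : w ∈ p.support) (hwq : w ∈ q.support) :
    w = a ∨ w = b := by
  have hdisj := List.disjoint_of_nodup_append (tail_support_append p q ▸ hpq.support_nodup)
  rw [← cons_tail_support, List.mem_cons] at hwp hwq
  rcases hwp with rfl | hwp
  · exact .inl rfl
  rcases hwq with rfl | hwq
  · exact .inr rfl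
  exact (hdisj hwp hwq).elim

lemma IsCycle.cons_isCycle_of_append {p : G.Walk a b} {q : G.Walk b a}
    (hpq : (p.append q).IsCycle) (hab : G.Adj a b) (hne : s(a, b) ∉ (p.append q).edges) :
    (cons hab q).IsCycle := by
  rw [cons_isCycle_iff]
  refine ⟨hpq.isPath_of_append_right (not_nil_of_ne hab.ne), fun h => hne ?_⟩
  rw [edges_append]
  exact List.mem_append_right _ h

lemma IsCycle.isChordless_of_length_eq_girth {c : G.Walk v v} (hc : c.IsCycle)
    (hlen : c.length = G.girth) : c.IsChordless := by
  intro e he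
  induction e using Sym2.ind with | _ x y => ?_
  obtain ⟨hxy, -, hx, hy⟩ := isChord_sym2Mk.mp he
  obtain ⟨p, q, hpq, hlen', hchord⟩ := hc.exists_append_isCycle hx hy
  have hne : s(x, y) ∉ (p.append q).edges := ((hchord _).mpr he).2.1
  have hshort := girth_le_length (hpq.cons_isCycle_of_append hxy hne)
  have hp0 : p.length ≠ 0 := fun h => hxy.ne (eq_of_length_eq_zero h)
  have hp1 : p.length ≠ 1 := fun h =>
    hne (edges_append p q ▸ List.mem_append_left _ (mem_edges_of_length_eq_one_s11 h))
  rw [length_cons] at hshort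
  rw [length_append] at hlen'
  omega

lemma IsCycle.isHole_cons_of_append (htf : G.CliqueFree 3) {p : G.Walk a b} {q : G.Walk b a}
    (hpq : (p.append q).IsCycle) (hab : G.Adj a b) (hne : s(a, b) ∉ (p.append q).edges)
    (hchord : ∀ e, (p.append q).IsChord e → e = s(a, b)) : G.IsHole (cons hab q) := by
  refine (hpq.cons_isCycle_of_append hab hne).isHole htf
    (isChordless_iff_forall_mem_edges.mpr fun x y hx hy hxy => ?_)
  have hsupp : ∀ {z}, z ∈ (cons hab q).support → z ∈ q.support := by
    intro z hz
    rcases List.mem_cons.mp (support_cons hab q ▸ hz) with rfl | hz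
    exacts [q.end_mem_support, hz]
  replace hx := hsupp hx
  replace hy := hsupp hy
  rw [edges_cons, List.mem_cons]
  by_cases hxy_ab : s(x, y) = s(a, b)
  · exact .inl hxy_ab
  have hmem : s(x, y) ∈ (p.append q).edges := by
    by_contra h
    exact hxy_ab (hchord _ (isChord_sym2Mk.mpr ⟨hxy, h,
      (mem_support_append_iff p q).mpr (.inr hx), (mem_support_append_iff p q).mpr (.inr hy)⟩))
  rw [edges_append, List.mem_append] at hmem
  refine .inr (hmem.resolve_left fun hp => hxy_ab ?_)
  -- an edge of `p` with both ends on `q` can only join `a` and `b`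
  have := hpq.eq_or_eq_of_mem_support_append_s11 (p.fst_mem_support_of_mem_edges hp) hx
  have := hpq.eq_or_eq_of_mem_support_append_s11 (p.snd_mem_support_of_mem_edges hp) hy
  grind [hxy.ne]

lemma IsCycle.exists_isHole_edgeSet_ne_of_unique_isChord (htf : G.CliqueFree 3)
    {d : G.Walk v v} (hd : d.IsCycle) {e : Sym2 V} (he : d.IsChord e)
    (huniq : ∀ f, d.IsChord f → f = e) :
    ∃ (w : V) (c₁ c₂ : G.Walk w w), G.IsHole c₁ ∧ G.IsHole c₂ ∧ c₁.edgeSet ≠ c₂.edgeSet := by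
  induction e using Sym2.ind with | _ a b => ?_
  obtain ⟨hab, -, ha, hb⟩ := isChord_sym2Mk.mp he
  obtain ⟨p, q, hpq, -, hchord⟩ := hd.exists_append_isCycle ha hb
  have hne : s(a, b) ∉ (p.append q).edges := ((hchord _).mpr he).2.1
  have huniq' (f) (hf : (p.append q).IsChord f) : f = s(a, b) := huniq f ((hchord f).mp hf)
  have hq : G.IsHole (cons hab q) := hpq.isHole_cons_of_append htf hab hne huniq'
  have hp : G.IsHole (cons hab p.reverse) := by
    have hqp : (q.reverse.append p.reverse).IsCycle := reverse_append p q ▸ hpq.reverse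
    refine hqp.isHole_cons_of_append htf hab ?_ fun f hf => huniq' f ?_
    · simpa [and_comm] using hne
    · rwa [← reverse_append, isChord_reverse] at hf
  obtain ⟨f, hf⟩ := List.exists_mem_of_ne_nil p.edges
    (edges_eq_nil.not.mpr (not_nil_of_ne hab.ne))
  have hfq : f ∉ q.edges :=
    List.disjoint_of_nodup_append (edges_append p q ▸ hpq.edges_nodup) hf
  have hfab : f ≠ s(a, b) := fun h => hne (h ▸ (edges_append p q ▸ List.mem_append_left _ hf))
  refine ⟨a, cons hab p.reverse, cons hab q, hp, hq, fun h => ?_⟩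
  have hf' : f ∈ (cons hab q).edgeSet := h ▸ (by simp [edgeSet, hf])
  simp only [edgeSet, Set.mem_ofPred_eq, edges_cons, List.mem_cons] at hf'
  exact hf'.elim hfab hfq

lemma IsChordless.mem_of_isChord_mapLe_deleteEdges {s : Set (Sym2 V)}
    {c : (G.deleteEdges s).Walk v w} (hc : c.IsChordless) {e : Sym2 V}
    (he : (c.mapLe (G.deleteEdges_le s)).IsChord e) : e ∈ s := by
  by_contra hs
  induction e using Sym2.ind with | _ x y => ?_
  refine hc (e := s(x, y)) ?_
  simp_all [isChord_sym2Mk]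

end Walk

lemma edgeSet_eq_of_holeEdgeSets_ncard_eq_one (hh : G.holeEdgeSets.ncard = 1)
    {c₁ : G.Walk v v} {c₂ : G.Walk w w} (h₁ : G.IsHole c₁) (h₂ : G.IsHole c₂) :
    c₁.edgeSet = c₂.edgeSet := by
  obtain ⟨S, hS⟩ := Set.ncard_eq_one.mp hh
  have hc₁ : c₁.edgeSet ∈ G.holeEdgeSets := ⟨v, c₁, h₁, rfl⟩
  have hc₂ : c₂.edgeSet ∈ G.holeEdgeSets := ⟨w, c₂, h₂, rfl⟩
  rw [hS, Set.mem_singleton_iff] at hc₁ hc₂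
  rw [hc₁, hc₂]

end SimpleGraph

theorem deleteEdge_of_hole_isAcyclic_of_unique_hole_general
    {V : Type*} (G : SimpleGraph V)
    (htf : G.CliqueFree 3)
    {u : V} (cH : G.Walk u u) (hHole : G.IsHole cH)
    (hh : G.holeEdgeSets.ncard = 1)
    (e : Sym2 V) (he : e ∈ cH.edges) :
    (G.deleteEdges {e}).IsAcyclic := by
  by_contra hcyc
  obtain ⟨v, c, hc, hlen⟩ := exists_girth_eq_length.mpr hcyc
  set d := c.mapLe (G.deleteEdges_le {e})
  have hd : d.IsCycle := hc.mapLe _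
  have hchord (f) (hf : d.IsChord f) : f = e :=
    (hc.isChordless_of_length_eq_girth hlen.symm).mem_of_isChord_mapLe_deleteEdges hf
  by_cases hde : d.IsChord e
  · obtain ⟨w, c₁, c₂, h₁, h₂, hne⟩ :=
      hd.exists_isHole_edgeSet_ne_of_unique_isChord htf hde hchord
    exact hne (edgeSet_eq_of_holeEdgeSets_ncard_eq_one hh h₁ h₂)
  · have hdHole : G.IsHole d := hd.isHole htf fun f hf => hde (hchord f hf ▸ hf)
    have he' : e ∈ d.edgeSet := edgeSet_eq_of_holeEdgeSets_ncard_eq_one hh hHole hdHole ▸ he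
    have heG' := c.edges_subset_edgeSet (by simpa [d, Walk.edgeSet] using he')
    simp [edgeSet_deleteEdges] at heG'

/-- If `G` is a connected triangle-free graph with exactly one hole `H`,
then deleting any edge of `H` leaves a forest. -/
theorem deleteEdge_of_hole_isAcyclic_of_unique_hole
    {V : Type*} [Fintype V] (G : SimpleGraph V) (hconn : G.Connected)
    (htf : G.CliqueFree 3)
    {u : V} (cH : G.Walk u u) (hHole : G.IsHole cH)
    (hh : G.holeEdgeSets.ncard = 1)
    (e : Sym2 V) (he : e ∈ cH.edges) :
    (G.deleteEdges {e}).IsAcyclic :=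
  deleteEdge_of_hole_isAcyclic_of_unique_hole_general G htf cH hHole hh e he
end
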